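/- Let β > 0 and let T_t(x,y) = (xy)^{1/2}/(2t) I_{β-1/2}(xy/(2t)) exp(-(x²+y²)/(4t)) be the Bessel heat kernel on (0,∞). Then there is a constant C such that for every y > 0: ∫_0^∞ x^{-1} ∫_0^∞ T_t(x,y) t^{-1/2} dt dx ≤ C. (This is the condition (A6) for the potential V(x) = -β/x appearing in the Bessel Riesz transform.) -/

import Mathlib

open Real Set MeasureTheory

/-- Modified Bessel function of the first kind (series definition). -/
noncomputable def besselI (ν x : ℝ) : ℝ :=
  ∑' n : ℕ, (x/2) ^ ν * (x/2) ^ (2*n) / (Nat.factorial n * Real.Gamma (n + ν + 1))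

/-- The Bessel heat kernel. -/
noncomputable def TB (β t x y : ℝ) : ℝ :=
  (x*y) ^ ((1:ℝ)/2) / (2*t) * besselI (β - 1/2) (x*y/(2*t)) * Real.exp (-(x^2+y^2)/(4*t))

/-!
Expanding `besselI` in its power series writes `x⁻¹ T_t(x,y) t^{-1/2}` as a series of terms
`c_n y^s x^{s-1} t^{-s-1} exp (-(x² + y²)/(4t))` with `s = β + 2n`. Integrating first in `x`
(a Gaussian moment) and then in `t` (an inverse-Gamma integral), the `n`-th term contributes
`Γ(n + β/2)² / (2 n! Γ(n + β + 1/2))`, independently of `y`. By log-convexity of `Γ` this is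
`O(n^{-3/2})`, so the series converges; all exchanges of sums and integrals are done with
nonnegative functions in `ℝ≥0∞`.
-/

theorem Real.Gamma_add_div_two_sq_le {a b : ℝ} (ha : 0 < a) (hb : 0 < b) :
    Gamma ((a + b) / 2) ^ 2 ≤ Gamma a * Gamma b := by
  have h := Gamma_mul_add_mul_le_rpow_Gamma_mul_rpow_Gamma ha hb one_half_pos one_half_pos
    (add_halves 1)
  rw [show 1 / 2 * a + 1 / 2 * b = (a + b) / 2 by ring] at h
  calc Gamma ((a + b) / 2) ^ 2 ≤ (Gamma a ^ (1 / 2 : ℝ) * Gamma b ^ (1 / 2 : ℝ)) ^ 2 :=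
        pow_le_pow_left₀ (Gamma_pos_of_pos (by positivity)).le h 2
    _ = Gamma a * Gamma b := by
        rw [mul_pow, ← rpow_natCast, ← rpow_natCast, ← rpow_mul (Gamma_pos_of_pos ha).le,
          ← rpow_mul (Gamma_pos_of_pos hb).le]
        norm_num

theorem Real.rpow_three_halves_mul_Gamma_le {x : ℝ} (hx : 0 < x) :
    x ^ (3 / 2 : ℝ) * Gamma x ≤ Gamma (x + 3 / 2) := by
  have hx' : 0 < x + 1 / 2 := by linarith
  have hshift : Gamma (x + 3 / 2) = (x + 1 / 2) * Gamma (x + 1 / 2) := by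
    rw [show x + 3 / 2 = x + 1 / 2 + 1 by ring, Gamma_add_one hx'.ne']
  have hmid := Gamma_add_div_two_sq_le hx' (by linarith : 0 < x + 3 / 2)
  rw [show (x + 1 / 2 + (x + 3 / 2)) / 2 = x + 1 by ring, Gamma_add_one hx.ne'] at hmid
  have hG := Gamma_pos_of_pos hx
  have h32 : x ^ (3 / 2 : ℝ) = x * sqrt x := by
    rw [sqrt_eq_rpow, ← rpow_one_add' hx.le (by norm_num)]; norm_num
  have hsq : (x * sqrt x * Gamma x) ^ 2 ≤ Gamma (x + 3 / 2) ^ 2 := by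
    have : sqrt x ^ 2 = x := sq_sqrt hx.le
    rw [hshift] at hmid ⊢
    nlinarith [sq_nonneg (x * Gamma x)]
  rw [h32]
  exact (pow_le_pow_iff_left₀ (by positivity) (Gamma_pos_of_pos (by linarith)).le
    two_ne_zero).mp hsq

noncomputable def a6Coeff (β : ℝ) (n : ℕ) : ℝ :=
  Gamma (n + β / 2) ^ 2 / (2 * n.factorial * Gamma (n + β + 1 / 2))

theorem a6Coeff_nonneg {β : ℝ} (hβ : -1 / 2 < β) (n : ℕ) : 0 ≤ a6Coeff β n := by
  have := Gamma_pos_of_pos (by linarith [n.cast_nonneg (α := ℝ)] : (0 : ℝ) < n + β + 1 / 2)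
  unfold a6Coeff
  positivity

theorem a6Coeff_succ_le {β : ℝ} (hβ : 0 < β) (n : ℕ) :
    a6Coeff β (n + 1) ≤ 1 / 2 * (1 / |n + β| ^ (3 / 2 : ℝ)) := by
  have hx : 0 < n + β := by positivity
  have hfac : (0 : ℝ) < (n + 1).factorial := by exact_mod_cast (n + 1).factorial_pos
  have hnum : Gamma ((n + 1 : ℕ) + β / 2) ^ 2 ≤ (n + 1).factorial * Gamma (n + β) := by
    have := Gamma_add_div_two_sq_le (by positivity : (0 : ℝ) < (n + 1 : ℕ) + 1) hx
    rwa [Gamma_nat_eq_factorial, show (((n + 1 : ℕ) : ℝ) + 1 + (n + β)) / 2 = (n + 1 : ℕ) + β / 2 by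
      push_cast; ring] at this
  have hden : (n + β) ^ (3 / 2 : ℝ) * Gamma (n + β) ≤ Gamma ((n + 1 : ℕ) + β + 1 / 2) := by
    convert rpow_three_halves_mul_Gamma_le hx using 2
    push_cast; ring
  have hG := Gamma_pos_of_pos hx
  rw [abs_of_pos hx, a6Coeff, div_le_iff₀ (by positivity)]
  calc Gamma ((n + 1 : ℕ) + β / 2) ^ 2 ≤ (n + 1).factorial * Gamma (n + β) := hnum
    _ = 1 / 2 * (1 / (n + β) ^ (3 / 2 : ℝ)) *
          (2 * (n + 1).factorial * ((n + β) ^ (3 / 2 : ℝ) * Gamma (n + β))) := by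
        field_simp
    _ ≤ _ := by gcongr

theorem summable_a6Coeff {β : ℝ} (hβ : 0 < β) : Summable (a6Coeff β) :=
  (summable_nat_add_iff 1).mp <| .of_nonneg_of_le (fun n => a6Coeff_nonneg (by linarith) _)
    (a6Coeff_succ_le hβ) (((summable_one_div_nat_add_rpow β _).mpr (by norm_num)).mul_left _)

theorem lintegral_rpow_mul_exp_neg_mul_rpow {p q b : ℝ} (hp : 0 < p) (hq : -1 < q) (hb : 0 < b) :
    ∫⁻ x in Ioi 0, ENNReal.ofReal (x ^ q * exp (-b * x ^ p)) =
      ENNReal.ofReal (b ^ (-(q + 1) / p) * (1 / p) * Gamma ((q + 1) / p)) := by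
  rw [← integral_rpow_mul_exp_neg_mul_rpow hp hq hb, ofReal_integral_eq_lintegral_ofReal
    (integrableOn_rpow_mul_exp_neg_mul_rpow hq hp hb)]
  exact (ae_restrict_iff' measurableSet_Ioi).mpr (ae_of_all _ fun x (hx : 0 < x) => by positivity)

theorem lintegral_rpow_mul_exp_neg_mul_sq {s b : ℝ} (hs : 0 < s) (hb : 0 < b) :
    ∫⁻ x in Ioi 0, ENNReal.ofReal (x ^ (s - 1) * exp (-b * x ^ 2)) =
      ENNReal.ofReal (Gamma (s / 2) / (2 * b ^ (s / 2))) := by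
  have h := lintegral_rpow_mul_exp_neg_mul_rpow two_pos (by linarith : -1 < s - 1) hb
  simp only [rpow_two, sub_add_cancel, neg_div, rpow_neg hb.le] at h
  rw [h]
  congr 1
  field_simp

theorem lintegral_rpow_mul_exp_neg_div {s a : ℝ} (hs : 0 < s) (ha : 0 < a) :
    ∫⁻ t in Ioi 0, ENNReal.ofReal (t ^ (-s - 1) * exp (-a / t)) =
      ENNReal.ofReal (Gamma s / a ^ s) := by
  have hinv : Inv.inv '' Ioi (0 : ℝ) = Ioi 0 := by
    rw [Set.image_eq_preimage_of_inverse inv_inv inv_inv]; ext; simp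
  rw [← hinv, lintegral_image_eq_lintegral_abs_deriv_mul measurableSet_Ioi
    (fun u (hu : 0 < u) => (hasDerivAt_inv hu.ne').hasDerivWithinAt) inv_injective.injOn]
  have h := lintegral_rpow_mul_exp_neg_mul_rpow one_pos (by linarith : -1 < s - 1) ha
  simp only [rpow_one, sub_add_cancel, div_one, mul_one] at h
  rw [rpow_neg ha.le, inv_mul_eq_div] at h
  rw [← h]
  refine setLIntegral_congr_fun measurableSet_Ioi fun u (hu : 0 < u) => ?_
  rw [← ENNReal.ofReal_mul (abs_nonneg _), abs_neg, abs_of_pos (by positivity), div_inv_eq_mul,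
    neg_mul, inv_rpow hu.le, ← rpow_neg hu.le, ← rpow_two, ← rpow_neg hu.le, ← mul_assoc,
    ← rpow_add hu]
  ring_nf

theorem lintegral_lintegral_rpow_mul_rpow_mul_exp_heat {s a : ℝ} (hs : 0 < s) (ha : 0 < a) :
    ∫⁻ x in Ioi 0, ∫⁻ t in Ioi 0,
        ENNReal.ofReal (x ^ (s - 1) * t ^ (-s - 1) * exp (-(x ^ 2 + a ^ 2) / (4 * t))) =
      ENNReal.ofReal (4 ^ s * Gamma (s / 2) ^ 2 / (2 * a ^ s)) := by
  have hΓ := Gamma_pos_of_pos (half_pos hs)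
  have hx_integral : ∀ t ∈ Ioi (0 : ℝ), ∫⁻ x in Ioi 0,
        ENNReal.ofReal (x ^ (s - 1) * t ^ (-s - 1) * exp (-(x ^ 2 + a ^ 2) / (4 * t))) =
      ENNReal.ofReal (4 ^ (s / 2) * Gamma (s / 2) / 2) *
        ENNReal.ofReal (t ^ (-(s / 2) - 1) * exp (-(a ^ 2 / 4) / t)) := by
    intro t (ht : 0 < t)
    have hsplit : ∀ x, x ^ (s - 1) * t ^ (-s - 1) * exp (-(x ^ 2 + a ^ 2) / (4 * t)) =
        t ^ (-s - 1) * exp (-(a ^ 2 / 4) / t) * (x ^ (s - 1) * exp (-(4 * t)⁻¹ * x ^ 2)) := by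
      intro x
      rw [show -(x ^ 2 + a ^ 2) / (4 * t) = -(a ^ 2 / 4) / t + -(4 * t)⁻¹ * x ^ 2 by
        field_simp; ring, exp_add]
      ring
    simp_rw [hsplit, ENNReal.ofReal_mul (by positivity : 0 ≤ t ^ (-s - 1) * exp (-(a ^ 2 / 4) / t))]
    rw [lintegral_const_mul' _ _ ENNReal.ofReal_ne_top,
      lintegral_rpow_mul_exp_neg_mul_sq hs (by positivity), ← ENNReal.ofReal_mul (by positivity),
      ← ENNReal.ofReal_mul (by positivity)]
    congr 1
    rw [inv_rpow (by positivity), mul_rpow (by norm_num) ht.le,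
      show -(s / 2) - 1 = -s - 1 + s / 2 by ring, rpow_add ht]
    field_simp
  rw [lintegral_lintegral_swap (by fun_prop), setLIntegral_congr_fun measurableSet_Ioi hx_integral,
    lintegral_const_mul' _ _ ENNReal.ofReal_ne_top, lintegral_rpow_mul_exp_neg_div (half_pos hs)
      (by positivity), ← ENNReal.ofReal_mul (by positivity)]
  congr 1
  have h4 : (4 : ℝ) ^ s = 4 ^ (s / 2) * 4 ^ (s / 2) := by rw [← rpow_add four_pos, add_halves]
  have ha2 : (a ^ 2) ^ (s / 2) = a ^ s := by
    rw [← rpow_natCast, ← rpow_mul ha.le]; congr 1; push_cast; ring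
  rw [div_rpow (by positivity) (by norm_num), ha2, h4]
  field_simp

theorem besselI_nonneg {ν x : ℝ} (hν : -1 < ν) (hx : 0 ≤ x) : 0 ≤ besselI ν x :=
  tsum_nonneg fun n => by
    have := Gamma_pos_of_pos (by linarith [n.cast_nonneg (α := ℝ)] : (0 : ℝ) < n + ν + 1)
    positivity

theorem TB_nonneg {β t x y : ℝ} (hβ : -1 / 2 < β) (ht : 0 < t) (hx : 0 ≤ x) (hy : 0 ≤ y) :
    0 ≤ TB β t x y := by
  have := besselI_nonneg (by linarith : -1 < β - 1 / 2) (by positivity : 0 ≤ x * y / (2 * t))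
  unfold TB
  positivity

noncomputable def a6Term (β y : ℝ) (n : ℕ) (x t : ℝ) : ℝ :=
  y ^ (β + 2 * n) / (4 ^ (β + 2 * n) * n.factorial * Gamma (n + β + 1 / 2)) *
    (x ^ (β + 2 * n - 1) * t ^ (-(β + 2 * n) - 1) * exp (-(x ^ 2 + y ^ 2) / (4 * t)))

theorem inv_mul_TB_mul_rpow_eq_tsum (β : ℝ) {t x y : ℝ} (ht : 0 < t) (hx : 0 < x) (hy : 0 < y) :
    x⁻¹ * (TB β t x y * t ^ (-(1 : ℝ) / 2)) = ∑' n, a6Term β y n x t := by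
  unfold TB besselI a6Term
  rw [← tsum_mul_left, ← tsum_mul_right, ← tsum_mul_right, ← tsum_mul_left]
  congr 1
  ext n
  rw [show x * y / (2 * t) / 2 = x * y / (4 * t) by ring, ← rpow_natCast,
    ← rpow_add (by positivity), show (n : ℝ) + (β - 1 / 2) + 1 = n + β + 1 / 2 by ring]
  push_cast
  set e : ℝ := β - 1 / 2 + 2 * n
  have hs : β + 2 * (n : ℝ) = e + 1 / 2 := by ring
  have hx' : x ^ (e + 1 / 2 - 1) = x ^ e * x ^ (1 / 2 : ℝ) * x⁻¹ := by
    rw [rpow_sub_one hx.ne', rpow_add hx, div_eq_mul_inv]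
  have ht' : t ^ (-(e + 1 / 2) - 1) = (t ^ e * t ^ (1 / 2 : ℝ) * t)⁻¹ := by
    rw [← rpow_add ht, ← rpow_add_one ht.ne', ← rpow_neg ht.le]; ring_nf
  have ht'' : t ^ (-1 / 2 : ℝ) = (t ^ (1 / 2 : ℝ))⁻¹ := by rw [← rpow_neg ht.le]; ring_nf
  have h4 : (4 : ℝ) ^ (e + 1 / 2) = 4 ^ e * 2 := by
    rw [rpow_add four_pos, show (4 : ℝ) = 2 ^ (2 : ℝ) by norm_num, ← rpow_mul two_pos.le]
    norm_num
  rw [hs, hx', ht', ht'', h4, rpow_add hy, div_rpow (by positivity) (by positivity),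
    mul_rpow hx.le hy.le, mul_rpow hx.le hy.le, mul_rpow four_pos.le ht.le]
  field_simp

theorem a6Term_nonneg {β y : ℝ} (hβ : -1 / 2 < β) (hy : 0 ≤ y) (n : ℕ) {x t : ℝ} (hx : 0 ≤ x)
    (ht : 0 ≤ t) : 0 ≤ a6Term β y n x t := by
  have := Gamma_pos_of_pos (by linarith [n.cast_nonneg (α := ℝ)] : (0 : ℝ) < n + β + 1 / 2)
  unfold a6Term
  positivity

theorem measurable_a6Term (β y : ℝ) (n : ℕ) :
    Measurable (Function.uncurry fun x t => ENNReal.ofReal (a6Term β y n x t)) := by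
  unfold a6Term
  fun_prop

theorem lintegral_lintegral_a6Term {β y : ℝ} (hβ : 0 < β) (hy : 0 < y) (n : ℕ) :
    ∫⁻ x in Ioi 0, ∫⁻ t in Ioi 0, ENNReal.ofReal (a6Term β y n x t) =
      ENNReal.ofReal (a6Coeff β n) := by
  have hs : 0 < β + 2 * n := by positivity
  have hΓ := Gamma_pos_of_pos (by positivity : 0 < n + β + 1 / 2)
  have hc : 0 ≤ y ^ (β + 2 * n) / (4 ^ (β + 2 * n) * n.factorial * Gamma (n + β + 1 / 2)) := by
    positivity
  simp_rw [a6Term, ENNReal.ofReal_mul hc, lintegral_const_mul' _ _ ENNReal.ofReal_ne_top]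
  rw [lintegral_lintegral_rpow_mul_rpow_mul_exp_heat hs hy, ← ENNReal.ofReal_mul hc, a6Coeff]
  congr 1
  rw [show (β + 2 * n) / 2 = n + β / 2 by ring]
  field_simp

theorem MeasureTheory.ofReal_integral_le_lintegral_ofReal {α : Type*} [MeasurableSpace α]
    {μ : Measure α} {f : α → ℝ} (hf : 0 ≤ᵐ[μ] f) :
    ENNReal.ofReal (∫ a, f a ∂μ) ≤ ∫⁻ a, ENNReal.ofReal (f a) ∂μ := by
  by_cases hi : Integrable f μ
  · exact (ofReal_integral_eq_lintegral_ofReal hi hf).le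
  · simp [integral_undef hi]

theorem ENNReal.ofReal_tsum_le_tsum_ofReal {α : Type*} {f : α → ℝ} (hf : ∀ a, 0 ≤ f a) :
    ENNReal.ofReal (∑' a, f a) ≤ ∑' a, ENNReal.ofReal (f a) := by
  by_cases h : Summable f
  · exact (ENNReal.ofReal_tsum_of_nonneg hf h).le
  · simp [tsum_eq_zero_of_not_summable h]

theorem ofReal_inv_mul_integral_TB_le {β y x : ℝ} (hβ : -1 / 2 < β) (hy : 0 < y) (hx : 0 < x) :
    ENNReal.ofReal (x⁻¹ * ∫ t in Ioi 0, TB β t x y * t ^ (-(1 : ℝ) / 2)) ≤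
      ∫⁻ t in Ioi 0, ∑' n, ENNReal.ofReal (a6Term β y n x t) := by
  rw [← integral_const_mul]
  refine (ofReal_integral_le_lintegral_ofReal ?_).trans (setLIntegral_mono' measurableSet_Ioi ?_)
  · refine (ae_restrict_iff' measurableSet_Ioi).mpr (ae_of_all _ fun t (ht : 0 < t) => ?_)
    exact mul_nonneg (inv_nonneg.mpr hx.le)
      (mul_nonneg (TB_nonneg hβ ht hx.le hy.le) (rpow_nonneg ht.le _))
  · intro t (ht : 0 < t)
    rw [inv_mul_TB_mul_rpow_eq_tsum β ht hx hy]
    exact ENNReal.ofReal_tsum_le_tsum_ofReal fun n => a6Term_nonneg hβ hy.le n hx.le ht.le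

theorem bessel_A6 (β : ℝ) (hβ : 0 < β) :
    ∃ C : ℝ, ∀ y : ℝ, 0 < y →
      ∫ x in Ioi (0:ℝ), x⁻¹ * ∫ t in Ioi (0:ℝ), TB β t x y * t ^ (-(1:ℝ)/2) ≤ C := by
  have hβ' : -1 / 2 < β := by linarith
  refine ⟨∑' n, a6Coeff β n, fun y hy => ?_⟩
  rw [← ENNReal.ofReal_le_ofReal_iff (tsum_nonneg (a6Coeff_nonneg hβ')),
    ENNReal.ofReal_tsum_of_nonneg (a6Coeff_nonneg hβ') (summable_a6Coeff hβ)]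
  calc ENNReal.ofReal (∫ x in Ioi 0, x⁻¹ * ∫ t in Ioi 0, TB β t x y * t ^ (-(1 : ℝ) / 2))
      ≤ ∫⁻ x in Ioi 0, ∫⁻ t in Ioi 0, ∑' n, ENNReal.ofReal (a6Term β y n x t) := by
        refine (ofReal_integral_le_lintegral_ofReal ?_).trans
          (setLIntegral_mono' measurableSet_Ioi fun x hx => ofReal_inv_mul_integral_TB_le hβ' hy hx)
        refine (ae_restrict_iff' measurableSet_Ioi).mpr (ae_of_all _ fun x (hx : 0 < x) => ?_)
        refine mul_nonneg (inv_nonneg.mpr hx.le)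
          (setIntegral_nonneg measurableSet_Ioi fun t ht => ?_)
        exact mul_nonneg (TB_nonneg hβ' ht hx.le hy.le) (rpow_nonneg (le_of_lt ht) _)
    _ = ∑' n, ∫⁻ x in Ioi 0, ∫⁻ t in Ioi 0, ENNReal.ofReal (a6Term β y n x t) := by
        simp_rw [lintegral_tsum fun n => (measurable_a6Term β y n).of_uncurry_left.aemeasurable]
        exact lintegral_tsum fun n => (measurable_a6Term β y n).lintegral_prod_right.aemeasurable
    _ = ∑' n, ENNReal.ofReal (a6Coeff β n) := tsum_congr (lintegral_lintegral_a6Term hβ hy)
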